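/- The interval [0, 1/6] is contained in S; that is, for every p ∈ [0,1/6] the measure p·δ_0 + ((1−p)/2)(δ_{-2}+δ_2) can be embedded in the simple symmetric random walk by a UI stopping time of the natural filtration. -/

import Mathlib

open MeasureTheory ProbabilityTheory Filter Set
open scoped ENNReal NNReal Topology

noncomputable section

namespace RWSkorokhod

variable {Ω : Type*} [MeasurableSpace Ω]

/-- The simple symmetric random walk `X n = ξ 1 + ⋯ + ξ n` built from the steps `ξ`. -/
def walk (ξ : ℕ → Ω → ℤ) (n : ℕ) (ω : Ω) : ℤ :=
  ∑ k ∈ Finset.Icc 1 n, ξ k ω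

/-- `ξ` is a sequence of i.i.d. symmetric `±1` steps under the probability measure `P`. -/
structure IsSSRW (P : Measure Ω) (ξ : ℕ → Ω → ℤ) : Prop where
  isProb : IsProbabilityMeasure P
  meas : ∀ k, Measurable (ξ k)
  indep : iIndepFun ξ P
  up : ∀ k, P {ω | ξ k ω = 1} = 1 / 2
  down : ∀ k, P {ω | ξ k ω = -1} = 1 / 2

lemma measurable_walk (ξ : ℕ → Ω → ℤ) (hm : ∀ k, Measurable (ξ k)) (n : ℕ) :
    Measurable (walk ξ n) :=
  Finset.measurable_sum _ fun k _ => hm k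

/-- The natural filtration of the random walk: `F n = σ(X 0, …, X n)`. -/
def natFilt (ξ : ℕ → Ω → ℤ) (hm : ∀ k, Measurable (ξ k)) :
    Filtration ℕ ‹MeasurableSpace Ω› where
  seq n := ⨆ k ∈ Set.Iic n, MeasurableSpace.comap (walk ξ k) inferInstance
  mono' i _ hij := biSup_mono fun k (hk : k ∈ Set.Iic i) => le_trans hk hij
  le' _ := iSup₂_le fun k _ => (measurable_walk ξ hm k).comap_le

/-- `τ` is an (extended-natural-number valued) stopping time for the filtration `F`. -/
def IsStop (F : Filtration ℕ ‹MeasurableSpace Ω›) (τ : Ω → ℕ∞) : Prop :=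
  ∀ n : ℕ, MeasurableSet[F n] {ω | τ ω ≤ (n : ℕ∞)}

/-- `τ` is almost surely finite. -/
def AEFinite (P : Measure Ω) (τ : Ω → ℕ∞) : Prop :=
  ∀ᵐ ω ∂P, τ ω < ⊤

/-- The value `X_τ` of the walk at the stopping time `τ` (junk on `{τ = ∞}`). -/
def stopVal (ξ : ℕ → Ω → ℤ) (τ : Ω → ℕ∞) (ω : Ω) : ℤ :=
  walk ξ (τ ω).toNat ω

/-- The stopped process `X_{n ∧ τ}`, viewed as a real-valued process. -/
def stopProc (ξ : ℕ → Ω → ℤ) (τ : Ω → ℕ∞) (n : ℕ) (ω : Ω) : ℝ :=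
  ((walk ξ (min (n : ℕ∞) (τ ω)).toNat ω : ℤ) : ℝ)

/-- `τ` embeds the measure `μ` : the law of `X_τ` under `P` is `μ`. -/
def Embeds (P : Measure Ω) (ξ : ℕ → Ω → ℤ) (τ : Ω → ℕ∞) (μ : Measure ℤ) : Prop :=
  Measure.map (stopVal ξ τ) P = μ

/-- `τ` is a UI stopping time: an a.s. finite stopping time of the natural filtration such
that the stopped process `(X_{n ∧ τ})` is a uniformly integrable martingale. -/
def IsUIStop (P : Measure Ω) (ξ : ℕ → Ω → ℤ) (hm : ∀ k, Measurable (ξ k))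
    (τ : Ω → ℕ∞) : Prop :=
  IsStop (natFilt ξ hm) τ ∧ AEFinite P τ ∧
    Martingale (stopProc ξ τ) (natFilt ξ hm) P ∧
    UniformIntegrable (stopProc ξ τ) 1 P

/-- The set `M₀^UI` of probability measures on `ℤ` which can be embedded in the random
walk by a UI stopping time of its natural filtration. -/
def MUI (P : Measure Ω) (ξ : ℕ → Ω → ℤ) (hm : ∀ k, Measurable (ξ k)) : Set (Measure ℤ) :=
  {μ | ∃ τ : Ω → ℕ∞, IsUIStop P ξ hm τ ∧ Embeds P ξ τ μ}

/-- A centered probability measure on `ℤ`: finite first moment and mean zero. -/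
def Centered (μ : Measure ℤ) : Prop :=
  IsProbabilityMeasure μ ∧ Integrable (fun n : ℤ => (n : ℝ)) μ ∧
    (∫ n : ℤ, (n : ℝ) ∂μ) = 0

/-- `τ` is a minimal stopping time: any stopping time `σ ≤ τ` a.s. with `X_σ ∼ X_τ`
equals `τ` a.s. -/
def Minimal (P : Measure Ω) (ξ : ℕ → Ω → ℤ) (hm : ∀ k, Measurable (ξ k))
    (τ : Ω → ℕ∞) : Prop :=
  ∀ σ : Ω → ℕ∞, IsStop (natFilt ξ hm) σ → (∀ᵐ ω ∂P, σ ω ≤ τ ω) →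
    Measure.map (stopVal ξ σ) P = Measure.map (stopVal ξ τ) P → σ =ᵐ[P] τ

/-- The measure `μ_p = p δ₀ + ((1-p)/2)(δ₋₂ + δ₂)` on `ℤ`. -/
def muP (p : ℝ) : Measure ℤ :=
  ENNReal.ofReal p • Measure.dirac 0 +
    ENNReal.ofReal ((1 - p) / 2) • (Measure.dirac (-2) + Measure.dirac 2)

/-- The set `S` of `p ∈ [0,1]` such that `μ_p` admits a UI embedding. -/
def Sset (P : Measure Ω) (ξ : ℕ → Ω → ℤ) (hm : ∀ k, Measurable (ξ k)) : Set ℝ :=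
  {p | p ∈ Set.Icc (0 : ℝ) 1 ∧ muP p ∈ MUI P ξ hm}

/-- The exit time `H_N = inf {n : X n ∉ [-N, N]}`. -/
def exitTime (ξ : ℕ → Ω → ℤ) (N : ℕ) (ω : Ω) : ℕ∞ :=
  ⨅ (n : ℕ) (_ : walk ξ n ω ∉ Set.Icc (-(N : ℤ)) (N : ℤ)), (n : ℕ∞)

/-!
Read the walk in blocks of two steps. A block `(b, -b)` brings the walk back to `0` and records a
fair bit `b`; a block `(e, e)` moves it to `2e`. Given integers `a k` with `a 0 = 0` and
`2 a k ≤ a (k + 1) ≤ 2 ^ (k + 1)`, stop after block `k` as soon as the walk is away from `0` or the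
number spelled by the first `k` bits is below `a k`. Before stopping the walk never leaves
`[-2, 2]`, so the stopped walk is a bounded, hence uniformly integrable, martingale. Block `k + 1`
stops it at `0` with probability `(a (k + 1) - 2 a k) / 4 ^ (k + 1)` and at each of `±2` with
probability `(2 ^ k - a k) / 4 ^ (k + 1)`, so everything reduces to writing
`p = ∑ (a (k + 1) - 2 a k) / 4 ^ (k + 1)`; a greedy choice of these digits succeeds when `p ≤ 1/6`.
-/

lemma ENat.toNat_eq_untopA (x : ℕ∞) (hx : x ≠ ⊤) : x.toNat = x.untopA := by
  lift x to ℕ using hx; rfl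

lemma martingale_stoppedProcess {𝒢 : Filtration ℕ ‹MeasurableSpace Ω›} {μ : Measure Ω}
    [IsFiniteMeasure μ] {f : ℕ → Ω → ℝ} {τ : Ω → ℕ∞} (hf : Martingale f 𝒢 μ)
    (hτ : IsStoppingTime 𝒢 τ) : Martingale (stoppedProcess f τ) 𝒢 μ :=
  martingale_iff.2 ⟨by simpa [show stoppedProcess (-f) τ = -(stoppedProcess f τ) from rfl]
    using (hf.neg.submartingale.stoppedProcess hτ).neg,
    hf.submartingale.stoppedProcess hτ⟩

lemma uniformIntegrable_of_ae_abs_le {ι : Type*} {μ : Measure Ω} [IsFiniteMeasure μ]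
    {f : ι → Ω → ℝ}
    (hf : ∀ n, AEStronglyMeasurable (f n) μ) {C : ℝ} (hC : ∀ᵐ ω ∂μ, ∀ n, |f n ω| ≤ C) :
    UniformIntegrable f 1 μ := by
  refine uniformIntegrable_of le_rfl ENNReal.one_ne_top hf fun ε _ => ⟨C.toNNReal + 1, fun n => ?_⟩
  suffices h : {ω | C.toNNReal + 1 ≤ ‖f n ω‖₊}.indicator (f n) =ᵐ[μ] 0 by
    rw [eLpNorm_congr_ae h, eLpNorm_zero]
    exact bot_le
  filter_upwards [hC] with ω hω
  refine Set.indicator_of_notMem (fun hmem => ?_) _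
  have h1 : (C.toNNReal : ℝ) + 1 ≤ |f n ω| := by exact_mod_cast hmem
  linarith [hω n, Real.le_coe_toNNReal C]

lemma map_restrict_eq_smul_dirac {β : Type*} [MeasurableSpace β] {μ : Measure Ω} {f : Ω → β}
    {A : Set Ω} (hA : MeasurableSet A) {c : β} (hf : ∀ ω ∈ A, f ω = c) :
    (μ.restrict A).map f = μ A • Measure.dirac c := by
  rw [Measure.map_congr (ae_restrict_of_forall_mem hA hf), Measure.map_const,
    Measure.restrict_apply_univ]

omit [MeasurableSpace Ω] in
lemma disjoint_of_eqOn_const {β : Type*} {f : Ω → β} {A B : Set Ω} {c c' : β}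
    (hA : ∀ ω ∈ A, f ω = c) (hB : ∀ ω ∈ B, f ω = c') (hne : c ≠ c') : Disjoint A B :=
  Set.disjoint_left.2 fun ω hωA hωB => hne ((hA ω hωA).symm.trans (hB ω hωB))

lemma ENNReal.tsum_natCast_mul_inv_two_pow {f : ℕ → ℕ} {x : ℝ}
    (hx : HasSum (fun k => (f k : ℝ) / 4 ^ (k + 1)) x) :
    ∑' k, (f k : ℝ≥0∞) * 2⁻¹ ^ (2 * (k + 1)) = ENNReal.ofReal x := by
  rw [← hx.tsum_eq, ENNReal.ofReal_tsum_of_nonneg (fun k => by positivity) hx.summable]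
  congr 1 with k
  rw [ENNReal.ofReal_div_of_pos (by positivity), ENNReal.ofReal_natCast, div_eq_mul_inv,
    ENNReal.ofReal_pow (by norm_num), pow_mul, ← ENNReal.inv_pow]
  norm_num [ENNReal.inv_pow]

omit [MeasurableSpace Ω] in
lemma walk_zero (ξ : ℕ → Ω → ℤ) (ω : Ω) : walk ξ 0 ω = 0 := by simp [walk]

omit [MeasurableSpace Ω] in
lemma walk_succ (ξ : ℕ → Ω → ℤ) (n : ℕ) (ω : Ω) :
    walk ξ (n + 1) ω = walk ξ n ω + ξ (n + 1) ω := by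
  rw [walk, walk, Finset.sum_Icc_succ_top (by omega)]

omit [MeasurableSpace Ω] in
lemma stopProc_eq_stoppedProcess (ξ : ℕ → Ω → ℤ) (τ : Ω → ℕ∞) :
    stopProc ξ τ = stoppedProcess (fun n ω => (walk ξ n ω : ℝ)) τ := by
  ext n ω
  exact congrArg (fun k => (walk ξ k ω : ℝ))
    (ENat.toNat_eq_untopA _ (ne_top_of_le_ne_top (ENat.natCast_ne_top n) (min_le_left _ _)))

lemma measurable_of_isStop {F : Filtration ℕ ‹MeasurableSpace Ω›} {τ : Ω → ℕ∞}
    (hτ : IsStop F τ) : Measurable τ :=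
  measurable_to_countable' fun x =>
    IsStoppingTime.measurable' (f := F) hτ (measurableSet_singleton (α := WithTop ℕ) x)

lemma measurable_stopVal {ξ : ℕ → Ω → ℤ} (hm : ∀ k, Measurable (ξ k)) {τ : Ω → ℕ∞}
    (hτ : Measurable τ) : Measurable (stopVal ξ τ) :=
  (measurable_from_prod_countable_right (f := fun q : ℕ∞ × Ω => walk ξ q.1.toNat q.2)
    fun n => measurable_walk ξ hm n.toNat).comp
    (hτ.prodMk measurable_id)

section Walk

variable {P : Measure Ω} {ξ : ℕ → Ω → ℤ}

lemma measurable_walk_natFilt (hm : ∀ k, Measurable (ξ k)) {k n : ℕ} (hkn : k ≤ n) :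
    Measurable[natFilt ξ hm n] (walk ξ k) :=
  Measurable.of_comap_le (le_biSup (fun k => MeasurableSpace.comap (walk ξ k) inferInstance)
    (Set.mem_Iic.2 hkn))

lemma measurable_step_natFilt (hm : ∀ k, Measurable (ξ k)) {i n : ℕ} (hi : 1 ≤ i) (hin : i ≤ n) :
    Measurable[natFilt ξ hm n] (ξ i) := by
  have hξ : ξ i = fun ω => walk ξ i ω - walk ξ (i - 1) ω := by
    ext ω
    obtain ⟨j, rfl⟩ := Nat.exists_eq_add_of_le' hi
    simp [walk_succ]
  rw [hξ]
  exact (measurable_walk_natFilt hm hin).sub (measurable_walk_natFilt hm (by omega))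

lemma natFilt_le_iSup_comap (hm : ∀ k, Measurable (ξ k)) (n : ℕ) :
    natFilt ξ hm n ≤ ⨆ i ∈ ({n + 1}ᶜ : Set ℕ), MeasurableSpace.comap (ξ i) inferInstance := by
  refine iSup₂_le fun k hk => (Finset.measurable_sum _ fun i hi => ?_).comap_le
  refine Measurable.of_comap_le (le_biSup (fun i => MeasurableSpace.comap (ξ i) inferInstance) ?_)
  have : k ≤ n := hk
  simp only [Finset.mem_Icc] at hi
  simp only [Set.mem_compl_iff, Set.mem_singleton_iff]
  omega

lemma IsSSRW.ae_eq_one_or_neg_one (W : IsSSRW P ξ) (i : ℕ) :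
    ∀ᵐ ω ∂P, ξ i ω = 1 ∨ ξ i ω = -1 := by
  have := W.isProb
  have hA : MeasurableSet {ω | ξ i ω = 1} := W.meas i (measurableSet_singleton 1)
  have hB : MeasurableSet {ω | ξ i ω = -1} := W.meas i (measurableSet_singleton (-1))
  have hdisj : Disjoint {ω | ξ i ω = 1} {ω | ξ i ω = -1} :=
    Set.disjoint_left.2 fun ω h1 h2 => by simp_all
  refine measure_mono_null (fun ω hω => ?_) (prob_compl_eq_zero_iff (hA.union hB) |>.2 ?_)
  · simpa [not_or] using hω
  · rw [measure_union hdisj hB, W.up i, W.down i, ENNReal.add_halves]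

lemma IsSSRW.cast_ae_eq_indicator (W : IsSSRW P ξ) (i : ℕ) :
    (fun ω => (ξ i ω : ℝ)) =ᵐ[P] fun ω => 2 * {ω | ξ i ω = 1}.indicator 1 ω - 1 := by
  filter_upwards [W.ae_eq_one_or_neg_one i] with ω hω
  rcases hω with h | h <;> norm_num [Set.indicator, h]

lemma IsSSRW.integrable (W : IsSSRW P ξ) (i : ℕ) : Integrable (fun ω => (ξ i ω : ℝ)) P := by
  have := W.isProb
  have hA : MeasurableSet {ω | ξ i ω = 1} := W.meas i (measurableSet_singleton 1)
  exact (((integrable_const 1).indicator hA).const_mul 2 |>.sub (integrable_const 1)).congr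
    (W.cast_ae_eq_indicator i).symm

lemma IsSSRW.integral_eq_zero (W : IsSSRW P ξ) (i : ℕ) : ∫ ω, (ξ i ω : ℝ) ∂P = 0 := by
  have := W.isProb
  have hA : MeasurableSet {ω | ξ i ω = 1} := W.meas i (measurableSet_singleton 1)
  rw [integral_congr_ae (W.cast_ae_eq_indicator i),
    integral_sub (((integrable_const 1).indicator hA).const_mul 2) (integrable_const 1),
    integral_const_mul, integral_indicator_one hA, measureReal_def, W.up i]
  simp

lemma IsSSRW.indep_natFilt (W : IsSSRW P ξ) (n : ℕ) :
    Indep (MeasurableSpace.comap (ξ (n + 1)) inferInstance) (natFilt ξ W.meas n) P := by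
  have h := indep_biSup_compl (fun i => (W.meas i).comap_le) W.indep.iIndep {n + 1}
  simp only [Set.mem_singleton_iff, iSup_iSup_eq_left] at h
  exact indep_of_indep_of_le_right h (natFilt_le_iSup_comap W.meas n)

lemma IsSSRW.martingale_walk (W : IsSSRW P ξ) :
    Martingale (fun n ω => (walk ξ n ω : ℝ)) (natFilt ξ W.meas) P := by
  have := W.isProb
  refine martingale_of_condExp_sub_eq_zero_nat
    (fun n => ((measurable_of_countable (fun z : ℤ => (z : ℝ))).comp
      (measurable_walk_natFilt W.meas le_rfl)).stronglyMeasurable)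
    (fun n => by simpa [walk] using integrable_finsetSum _ fun i _ => W.integrable i)
    fun n => ?_
  have hstep : (fun ω => (walk ξ (n + 1) ω : ℝ)) - (fun ω => (walk ξ n ω : ℝ)) =
      fun ω => (ξ (n + 1) ω : ℝ) := by
    ext ω; simp [walk_succ]
  rw [hstep]
  refine (condExp_indep_eq (W.meas (n + 1)).comap_le ((natFilt ξ W.meas).le n)
    ((measurable_of_countable (fun z : ℤ => (z : ℝ))).comp
      (Measurable.of_comap_le le_rfl)).stronglyMeasurable (W.indep_natFilt n)).trans ?_
  simp only [Function.comp_def, W.integral_eq_zero]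
  rfl

end Walk

structure IsThreshold (p : ℝ) (a : ℕ → ℕ) : Prop where
  zero : a 0 = 0
  two_mul_le : ∀ k, 2 * a k ≤ a (k + 1)
  le_two_pow : ∀ k, a k ≤ 2 ^ k
  hasSum : HasSum (fun k => ((a (k + 1) - 2 * a k : ℕ) : ℝ) / 4 ^ (k + 1)) p

namespace IsThreshold

variable {p : ℝ} {a : ℕ → ℕ}

lemma mul_two_pow_le (ha : IsThreshold p a) {j k : ℕ} (hjk : j ≤ k) : a j * 2 ^ (k - j) ≤ a k := by
  induction k, hjk using Nat.le_induction with
  | base => simp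
  | succ k hjk ih =>
    calc a j * 2 ^ (k + 1 - j) = 2 * (a j * 2 ^ (k - j)) := by
          rw [Nat.sub_add_comm hjk, pow_succ]; ring
      _ ≤ 2 * a k := Nat.mul_le_mul_left 2 ih
      _ ≤ a (k + 1) := ha.two_mul_le k

lemma hasSum_exit (ha : IsThreshold p a) :
    HasSum (fun k => ((2 ^ k - a k : ℕ) : ℝ) / 4 ^ (k + 1)) ((1 - p) / 2) := by
  set t : ℕ → ℝ := fun k => ((2 ^ k - a k : ℕ) : ℝ) / 4 ^ k with ht_def
  -- the stopped mass of block `k` is what leaves the surviving mass `t k`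
  have htelescope : ∀ k, ((a (k + 1) - 2 * a k : ℕ) : ℝ) / 4 ^ (k + 1) +
      2 * (((2 ^ k - a k : ℕ) : ℝ) / 4 ^ (k + 1)) = t k - t (k + 1) := fun k => by
    simp only [ht_def]
    rw [Nat.cast_sub (ha.two_mul_le k), Nat.cast_sub (ha.le_two_pow k),
      Nat.cast_sub (ha.le_two_pow (k + 1))]
    push_cast
    field_simp
    ring
  have ht : Tendsto t atTop (𝓝 0) := by
    refine squeeze_zero (fun k => by positivity) (fun k => ?_)
      (tendsto_pow_atTop_nhds_zero_of_lt_one (r := (2 : ℝ)⁻¹) (by norm_num) (by norm_num))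
    calc t k ≤ (2 : ℝ) ^ k / 4 ^ k := by simp only [ht_def]; gcongr; exact_mod_cast Nat.sub_le _ _
      _ = (2 : ℝ)⁻¹ ^ k := by rw [← div_pow]; norm_num
  have hpartial : ∀ K, ∑ k ∈ Finset.range K, ((2 ^ k - a k : ℕ) : ℝ) / 4 ^ (k + 1) =
      (1 - t K - ∑ k ∈ Finset.range K, ((a (k + 1) - 2 * a k : ℕ) : ℝ) / 4 ^ (k + 1)) / 2 := by
    intro K
    have h := Finset.sum_range_sub' t K
    simp only [← htelescope, Finset.sum_add_distrib, ← Finset.mul_sum] at h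
    simp only [ht_def, ha.zero] at h
    norm_num at h
    linarith
  rw [hasSum_iff_tendsto_nat_of_nonneg (fun k => by positivity)]
  simp_rw [hpartial]
  simpa using ((tendsto_const_nhds.sub ht).sub ha.hasSum.tendsto_sum_nat).div_const 2

end IsThreshold

/-- The least digit that keeps `v ≤ s - 1`; in the two tight states allowed by `Feasible` the
digit is forced. -/
def digit (s : ℕ) (v : ℝ) : ℕ :=
  if v ≤ s - 1 then ⌈4 * v - 2 * s + 1⌉₊ else 2 * (s - 1)

/-- The state `(s, v)` after `k` digits: `s = 2 ^ k - a k` bit strings survive, and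
`v / (2 * 4 ^ k)` is the mass still to be placed at `0`. -/
def digitState (p : ℝ) : ℕ → ℕ × ℝ
  | 0 => (1, 2 * p)
  | k + 1 =>
    ((2 * (digitState p k).1 - digit (digitState p k).1 (digitState p k).2),
      4 * (digitState p k).2 - 2 * digit (digitState p k).1 (digitState p k).2)

def Feasible (s : ℕ) (v : ℝ) : Prop :=
  0 ≤ v ∧ (v ≤ s - 1 ∨ (s ≤ 2 ∧ v ≤ s - 2 / 3))

lemma Feasible.le {s : ℕ} {v : ℝ} (h : Feasible s v) : v ≤ s := by
  rcases h with ⟨_, h | ⟨_, h⟩⟩ <;> linarith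

lemma Feasible.step {s : ℕ} {v : ℝ} (h : Feasible s v) :
    digit s v ≤ 2 * s ∧ Feasible (2 * s - digit s v) (4 * v - 2 * digit s v) := by
  obtain ⟨hv, htight⟩ := h
  by_cases hsafe : v ≤ s - 1
  · set x : ℝ := 4 * v - 2 * s + 1
    have hd : digit s v = ⌈x⌉₊ := if_pos hsafe
    have hxc : x ≤ ⌈x⌉₊ := Nat.le_ceil x
    have hc : (⌈x⌉₊ : ℝ) ≤ 2 * v := by
      rcases le_or_gt x 0 with hx | hx
      · rw [Nat.ceil_eq_zero.2 hx, Nat.cast_zero]; linarith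
      · linarith [Nat.ceil_lt_add_one hx.le]
    have hcs : ⌈x⌉₊ ≤ 2 * s := by
      have : (⌈x⌉₊ : ℝ) ≤ 2 * s := by linarith
      exact_mod_cast this
    rw [hd]
    refine ⟨hcs, by linarith, Or.inl ?_⟩
    rw [Nat.cast_sub hcs]
    push_cast
    linarith
  · obtain ⟨hs2, hv2⟩ := htight.resolve_left hsafe
    have hd : digit s v = 2 * (s - 1) := if_neg hsafe
    have hs : s = 1 ∨ s = 2 := by
      have : (0 : ℝ) < s := by linarith
      have : 0 < s := by exact_mod_cast this
      omega
    rcases hs with rfl | rfl <;> norm_num [hd, Feasible] at hsafe hv2 ⊢ <;>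
      exact ⟨by linarith, Or.inr (by linarith)⟩

section DigitState

variable {p : ℝ}

lemma feasible_digitState (hp : p ∈ Icc (0 : ℝ) (1 / 6)) :
    ∀ k, Feasible (digitState p k).1 (digitState p k).2
  | 0 => ⟨by norm_num [digitState]; exact hp.1,
      Or.inr ⟨by norm_num [digitState], by norm_num [digitState]; linarith [hp.2]⟩⟩
  | k + 1 => (feasible_digitState hp k).step.2

lemma digitState_fst_le_two_pow : ∀ k, (digitState p k).1 ≤ 2 ^ k
  | 0 => le_rfl
  | k + 1 => by
    have h : (digitState p k).1 ≤ 2 ^ k := digitState_fst_le_two_pow k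
    simp only [digitState, pow_succ]
    omega

lemma sum_range_digit (K : ℕ) :
    ∑ k ∈ Finset.range K, (digit (digitState p k).1 (digitState p k).2 : ℝ) / 4 ^ (k + 1) =
      p - (digitState p K).2 / (2 * 4 ^ K) := by
  induction K with
  | zero => simp [digitState]
  | succ K ih =>
    rw [Finset.sum_range_succ, ih]
    simp only [digitState]
    field_simp
    ring

lemma exists_isThreshold (hp : p ∈ Icc (0 : ℝ) (1 / 6)) : ∃ a, IsThreshold p a := by
  have hdigit k : 2 ^ (k + 1) - (digitState p (k + 1)).1 =
      2 * (2 ^ k - (digitState p k).1) + digit (digitState p k).1 (digitState p k).2 := by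
    have := (feasible_digitState hp k).step.1
    have : (digitState p k).1 ≤ 2 ^ k := digitState_fst_le_two_pow k
    simp only [digitState, pow_succ]
    omega
  refine ⟨fun k => 2 ^ k - (digitState p k).1, rfl, fun k => by simp only [hdigit]; omega,
    fun k => Nat.sub_le _ _, ?_⟩
  simp only [hdigit, Nat.add_sub_cancel_left]
  rw [hasSum_iff_tendsto_nat_of_nonneg (fun k => by positivity)]
  simp_rw [sum_range_digit]
  have hres : Tendsto (fun K => (digitState p K).2 / (2 * 4 ^ K)) atTop (𝓝 0) := by
    refine squeeze_zero (fun K => div_nonneg (feasible_digitState hp K).1 (by positivity))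
      (fun K => ?_) (tendsto_pow_atTop_nhds_zero_of_lt_one (r := (2 : ℝ)⁻¹) (by norm_num)
        (by norm_num))
    have hv : (digitState p K).2 ≤ 2 ^ K := (feasible_digitState hp K).le.trans
      (by exact_mod_cast digitState_fst_le_two_pow K)
    calc (digitState p K).2 / (2 * 4 ^ K) ≤ 2 ^ K / 4 ^ K := by
          gcongr
          have : (0 : ℝ) < 4 ^ K := by positivity
          linarith
        _ = (2 : ℝ)⁻¹ ^ K := by rw [← div_pow]; norm_num
  simpa using tendsto_const_nhds.sub hres

end DigitState

section StoppingRule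

variable (ξ : ℕ → Ω → ℤ) (a : ℕ → ℕ)

def bit (k : ℕ) (ω : Ω) : ℕ := if ξ (2 * k + 1) ω = 1 then 1 else 0

def bitsValue : ℕ → Ω → ℕ
  | 0 => fun _ => 0
  | k + 1 => fun ω => 2 * bitsValue k ω + bit ξ k ω

def StopsAt (k : ℕ) (ω : Ω) : Prop := walk ξ (2 * k) ω ≠ 0 ∨ bitsValue ξ k ω < a k

def stopTime (ω : Ω) : ℕ∞ := ⨅ (k : ℕ) (_ : StopsAt ξ a k ω), ((2 * k : ℕ) : ℕ∞)

variable {ξ a}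

omit [MeasurableSpace Ω] in
lemma stopTime_le_iff {n : ℕ} {ω : Ω} :
    stopTime ξ a ω ≤ n ↔ ∃ k, 2 * k ≤ n ∧ StopsAt ξ a k ω := by
  refine ⟨fun h => ?_, fun ⟨k, hkn, hk⟩ => (iInf₂_le k hk).trans (by exact_mod_cast hkn)⟩
  by_contra! hnone
  have : ((n + 1 : ℕ) : ℕ∞) ≤ stopTime ξ a ω :=
    le_iInf₂ fun k hk => by exact_mod_cast not_le.1 fun h' => hnone k h' hk
  exact absurd (this.trans h) (by norm_cast; omega)

omit [MeasurableSpace Ω] in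
lemma stopTime_eq {k : ℕ} {ω : Ω} (hk : StopsAt ξ a k ω) (hmin : ∀ j < k, ¬StopsAt ξ a j ω) :
    stopTime ξ a ω = (2 * k : ℕ) :=
  le_antisymm (iInf₂_le k hk) <| le_iInf₂ fun j hj => by
    exact_mod_cast Nat.mul_le_mul_left 2 (not_lt.1 fun hjk => hmin j hjk hj)

lemma measurable_bitsValue (hm : ∀ k, Measurable (ξ k)) (k : ℕ) :
    Measurable[natFilt ξ hm (2 * k)] (bitsValue ξ k) := by
  induction k with
  | zero => exact measurable_const
  | succ k ih =>
    have hbit : Measurable[natFilt ξ hm (2 * (k + 1))] (bit ξ k) :=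
      Measurable.ite (measurable_step_natFilt hm (by omega) (by omega) (measurableSet_singleton 1))
        measurable_const measurable_const
    exact ((ih.mono ((natFilt ξ hm).mono (by omega)) le_rfl).const_mul 2).add hbit

lemma measurableSet_stopsAt (hm : ∀ k, Measurable (ξ k)) (k : ℕ) :
    MeasurableSet[natFilt ξ hm (2 * k)] {ω | StopsAt ξ a k ω} :=
  ((measurable_walk_natFilt hm le_rfl) (measurableSet_singleton 0)).compl.union
    (measurable_bitsValue hm k measurableSet_Iio)

lemma isStop_stopTime (hm : ∀ k, Measurable (ξ k)) :
    IsStop (natFilt ξ hm) (stopTime ξ a) := by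
  intro n
  have : {ω | stopTime ξ a ω ≤ n} = ⋃ k ∈ Finset.range (n / 2 + 1), {ω | StopsAt ξ a k ω} := by
    ext ω
    simp only [Set.mem_ofPred_eq, stopTime_le_iff, Set.mem_iUnion, Finset.mem_range, exists_prop]
    exact exists_congr fun k => and_congr_left fun _ => by omega
  rw [this]
  exact Finset.measurableSet_biUnion _ fun k hk =>
    (natFilt ξ hm).mono (by simp at hk; omega) _ (measurableSet_stopsAt hm k)

end StoppingRule

def cylinder (ξ : ℕ → Ω → ℤ) (n : ℕ) (σ : ℕ → ℤ) : Set Ω := ⋂ i ∈ Finset.Icc 1 n, ξ i ⁻¹' {σ i}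

section Cylinders

variable {ξ : ℕ → Ω → ℤ}

omit [MeasurableSpace Ω] in
lemma mem_cylinder {n : ℕ} {σ : ℕ → ℤ} {ω : Ω} :
    ω ∈ cylinder ξ n σ ↔ ∀ i, 1 ≤ i → i ≤ n → ξ i ω = σ i := by
  simp [cylinder, and_imp]

lemma measurableSet_cylinder (hm : ∀ k, Measurable (ξ k)) (n : ℕ) (σ : ℕ → ℤ) :
    MeasurableSet (cylinder ξ n σ) :=
  Finset.measurableSet_biInter _ fun i _ => hm i (measurableSet_singleton (σ i))

lemma IsSSRW.measure_cylinder {P : Measure Ω} (W : IsSSRW P ξ) {n : ℕ} {σ : ℕ → ℤ}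
    (hσ : ∀ i, 1 ≤ i → i ≤ n → σ i = 1 ∨ σ i = -1) : P (cylinder ξ n σ) = 2⁻¹ ^ n := by
  rw [cylinder, W.indep.meas_biInter fun i _ => ⟨{σ i}, measurableSet_singleton _, rfl⟩,
    Finset.prod_congr rfl fun i hi => ?_, Finset.prod_const, Nat.card_Icc, Nat.add_sub_cancel]
  obtain ⟨hi1, hin⟩ := Finset.mem_Icc.1 hi
  rcases hσ i hi1 hin with h | h <;> rw [h, ← one_div]
  exacts [W.up i, W.down i]

end Cylinders

def bitSign (k m j : ℕ) : ℤ := if m / 2 ^ (k - j) % 2 = 1 then 1 else -1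

/-- The steps of `k` blocks `(b, -b)` whose first steps `b` spell the binary digits of `m`. -/
def neutralPattern (k m i : ℕ) : ℤ :=
  if i % 2 = 1 then bitSign k m ((i + 1) / 2) else -bitSign k m (i / 2)

def exitPattern (e : ℤ) (k m i : ℕ) : ℤ := if i ≤ 2 * k then neutralPattern k m i else e

lemma bitSign_eq_one_or (k m j : ℕ) : bitSign k m j = 1 ∨ bitSign k m j = -1 := by
  unfold bitSign; split <;> simp

lemma neutralPattern_eq_one_or (k m i : ℕ) :
    neutralPattern k m i = 1 ∨ neutralPattern k m i = -1 := by
  unfold neutralPattern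
  split
  · exact bitSign_eq_one_or _ _ _
  · rcases bitSign_eq_one_or k m (i / 2) with h | h <;> simp [h]

lemma neutralPattern_odd (k m j : ℕ) : neutralPattern k m (2 * j + 1) = bitSign k m (j + 1) := by
  simp [neutralPattern, show (2 * j + 1 + 1) / 2 = j + 1 by omega]

lemma neutralPattern_even (k m j : ℕ) :
    neutralPattern k m (2 * j + 2) = -bitSign k m (j + 1) := by
  simp [neutralPattern, show (2 * j + 2) % 2 = 0 by omega, show (2 * j + 2) / 2 = j + 1 by omega]

lemma exitPattern_eq_one_or {e : ℤ} (he : e = 1 ∨ e = -1) (k m i : ℕ) :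
    exitPattern e k m i = 1 ∨ exitPattern e k m i = -1 := by
  unfold exitPattern
  split
  · exact neutralPattern_eq_one_or _ _ _
  · exact he

section NeutralCylinder

variable {ξ : ℕ → Ω → ℤ} {k m : ℕ} {ω : Ω}

omit [MeasurableSpace Ω]

lemma exit_cylinder_subset (e : ℤ) :
    cylinder ξ (2 * (k + 1)) (exitPattern e k m) ⊆ cylinder ξ (2 * k) (neutralPattern k m) :=
  fun _ hω => mem_cylinder.2 fun i hi1 hik =>
    (mem_cylinder.1 hω i hi1 (by omega)).trans (if_pos hik)

lemma mem_exit_cylinder_last {e : ℤ} (hω : ω ∈ cylinder ξ (2 * (k + 1)) (exitPattern e k m)) :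
    ξ (2 * k + 1) ω = e ∧ ξ (2 * k + 2) ω = e :=
  ⟨(mem_cylinder.1 hω _ (by omega) (by omega)).trans (if_neg (by omega)),
    (mem_cylinder.1 hω _ (by omega) (by omega)).trans (if_neg (by omega))⟩

section

variable (hω : ω ∈ cylinder ξ (2 * k) (neutralPattern k m))
include hω

lemma walk_two_mul_eq_zero {j : ℕ} (hj : j ≤ k) : walk ξ (2 * j) ω = 0 := by
  induction j with
  | zero => exact walk_zero ξ ω
  | succ j ih =>
    have hodd := mem_cylinder.1 hω (2 * j + 1) (by omega) (by omega)
    have heven := mem_cylinder.1 hω (2 * j + 2) (by omega) (by omega)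
    rw [show 2 * (j + 1) = 2 * j + 1 + 1 by ring, walk_succ, walk_succ, ih (by omega), hodd,
      heven, neutralPattern_odd, neutralPattern_even]
    ring

lemma abs_walk_le_one {i : ℕ} (hi : i ≤ 2 * k) : |walk ξ i ω| ≤ 1 := by
  obtain ⟨l, rfl | rfl⟩ := Nat.even_or_odd' i
  · rw [walk_two_mul_eq_zero hω (by omega)]; norm_num
  · rw [walk_succ, walk_two_mul_eq_zero hω (by omega), mem_cylinder.1 hω _ (by omega) hi]
    rcases neutralPattern_eq_one_or k m (2 * l + 1) with h | h <;> simp [h]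

lemma bitsValue_eq (hm : m < 2 ^ k) {j : ℕ} (hj : j ≤ k) :
    bitsValue ξ j ω = m / 2 ^ (k - j) := by
  induction j with
  | zero => simp [bitsValue, Nat.div_eq_of_lt hm]
  | succ j ih =>
    have hodd := mem_cylinder.1 hω (2 * j + 1) (by omega) (by omega)
    have hbit : bit ξ j ω = m / 2 ^ (k - (j + 1)) % 2 := by
      rw [bit, hodd, neutralPattern_odd, bitSign]
      split_ifs <;> first | omega | simp_all
    have hdiv : m / 2 ^ (k - j) = m / 2 ^ (k - (j + 1)) / 2 := by
      rw [Nat.div_div_eq_div_mul, ← pow_succ, show k - (j + 1) + 1 = k - j by omega]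
    simp only [bitsValue]
    rw [ih (by omega), hbit, hdiv]
    omega

end

lemma disjoint_neutral_cylinder {m' : ℕ} (hm : m < 2 ^ k) (hm' : m' < 2 ^ k)
    (hne : m ≠ m') :
    Disjoint (cylinder ξ (2 * k) (neutralPattern k m)) (cylinder ξ (2 * k) (neutralPattern k m')) :=
  Set.disjoint_left.2 fun _ h h' => hne <| by
    simpa using (bitsValue_eq h hm le_rfl).symm.trans (bitsValue_eq h' hm' le_rfl)

end NeutralCylinder

def zeroStage (ξ : ℕ → Ω → ℤ) (a : ℕ → ℕ) (k : ℕ) : Set Ω :=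
  ⋃ m ∈ Finset.Ico (2 * a k) (a (k + 1)), cylinder ξ (2 * (k + 1)) (neutralPattern (k + 1) m)

def exitStage (ξ : ℕ → Ω → ℤ) (a : ℕ → ℕ) (e : ℤ) (k : ℕ) : Set Ω :=
  ⋃ m ∈ Finset.Ico (a k) (2 ^ k), cylinder ξ (2 * (k + 1)) (exitPattern e k m)

def StoppedAt (ξ : ℕ → Ω → ℤ) (a : ℕ → ℕ) (N : ℕ) (z : ℤ) (ω : Ω) : Prop :=
  stopTime ξ a ω = N ∧ walk ξ N ω = z ∧ ∀ i ≤ N, |walk ξ i ω| ≤ 2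

section Stages

variable {ξ : ℕ → Ω → ℤ} {p : ℝ} {a : ℕ → ℕ} {k : ℕ} {ω : Ω}

omit [MeasurableSpace Ω]

lemma not_stopsAt_of_mem_cylinder {K m j : ℕ}
    (hω : ω ∈ cylinder ξ (2 * K) (neutralPattern K m)) (hm : m < 2 ^ K) (hj : j ≤ K)
    (haj : a j * 2 ^ (K - j) ≤ m) : ¬StopsAt ξ a j ω := by
  rintro (h | h)
  · exact h (walk_two_mul_eq_zero hω hj)
  · rw [bitsValue_eq hω hm hj] at h
    exact h.not_ge ((Nat.le_div_iff_mul_le (by positivity)).2 haj)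

lemma stoppedAt_of_mem_zeroStage (ha : IsThreshold p a) (hω : ω ∈ zeroStage ξ a k) :
    StoppedAt ξ a (2 * (k + 1)) 0 ω := by
  simp only [zeroStage, Set.mem_iUnion, Finset.mem_Ico, exists_prop] at hω
  obtain ⟨m, ⟨hm1, hm2⟩, hω⟩ := hω
  have hm : m < 2 ^ (k + 1) := hm2.trans_le (ha.le_two_pow _)
  refine ⟨stopTime_eq (Or.inr ?_) fun j hj => not_stopsAt_of_mem_cylinder hω hm (by omega) ?_,
    walk_two_mul_eq_zero hω le_rfl, fun i hi => (abs_walk_le_one hω hi).trans one_le_two⟩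
  · rwa [bitsValue_eq hω hm le_rfl, Nat.sub_self, pow_zero, Nat.div_one]
  · calc a j * 2 ^ (k + 1 - j) = 2 * (a j * 2 ^ (k - j)) := by
          rw [Nat.sub_add_comm (by omega), pow_succ]; ring
      _ ≤ 2 * a k := Nat.mul_le_mul_left 2 (ha.mul_two_pow_le (by omega))
      _ ≤ m := hm1

lemma stoppedAt_of_mem_exitStage (ha : IsThreshold p a) {e : ℤ} (he : e = 1 ∨ e = -1)
    (hω : ω ∈ exitStage ξ a e k) : StoppedAt ξ a (2 * (k + 1)) (2 * e) ω := by
  simp only [exitStage, Set.mem_iUnion, Finset.mem_Ico, exists_prop] at hω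
  obtain ⟨m, ⟨hm1, hm2⟩, hω⟩ := hω
  have hneutral := exit_cylinder_subset e hω
  obtain ⟨hlast1, hlast2⟩ := mem_exit_cylinder_last hω
  have hwalk1 : walk ξ (2 * k + 1) ω = e := by
    rw [walk_succ, walk_two_mul_eq_zero hneutral le_rfl, hlast1, zero_add]
  have hwalk2 : walk ξ (2 * (k + 1)) ω = 2 * e := by
    rw [show 2 * (k + 1) = 2 * k + 1 + 1 by ring, walk_succ, hwalk1, hlast2]; ring
  refine ⟨stopTime_eq (Or.inl ?_) fun j hj => not_stopsAt_of_mem_cylinder hneutral hm2 (by omega)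
    ((ha.mul_two_pow_le (by omega)).trans hm1), hwalk2, fun i hi => ?_⟩
  · rw [hwalk2]; rcases he with rfl | rfl <;> norm_num
  · rcases (show i ≤ 2 * k ∨ i = 2 * k + 1 ∨ i = 2 * (k + 1) by omega) with hi | rfl | rfl
    · exact (abs_walk_le_one hneutral hi).trans one_le_two
    · rw [hwalk1]; rcases he with rfl | rfl <;> norm_num
    · rw [hwalk2]; rcases he with rfl | rfl <;> norm_num

variable {N : ℕ} {z : ℤ}

lemma StoppedAt.stopVal_eq (h : StoppedAt ξ a N z ω) : stopVal ξ (stopTime ξ a) ω = z := by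
  rw [stopVal, h.1, ENat.toNat_natCast, h.2.1]

lemma StoppedAt.stopTime_lt_top (h : StoppedAt ξ a N z ω) : stopTime ξ a ω < ⊤ := by
  rw [h.1]; exact ENat.natCast_lt_top N

lemma StoppedAt.abs_stopProc_le (h : StoppedAt ξ a N z ω) (n : ℕ) :
    |stopProc ξ (stopTime ξ a) n ω| ≤ 2 := by
  rw [stopProc, h.1, ← (Nat.mono_cast (α := ℕ∞)).map_min, ENat.toNat_natCast]
  exact_mod_cast h.2.2 _ (min_le_right _ _)

end Stages

def zeroEvent (ξ : ℕ → Ω → ℤ) (a : ℕ → ℕ) : Set Ω := ⋃ k, zeroStage ξ a k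

def exitEvent (ξ : ℕ → Ω → ℤ) (a : ℕ → ℕ) (e : ℤ) : Set Ω := ⋃ k, exitStage ξ a e k

section Embedding

variable {P : Measure Ω} {ξ : ℕ → Ω → ℤ} {p : ℝ} {a : ℕ → ℕ}

lemma measurableSet_zeroStage (hm : ∀ k, Measurable (ξ k)) (k : ℕ) :
    MeasurableSet (zeroStage ξ a k) :=
  Finset.measurableSet_biUnion _ fun _ _ => measurableSet_cylinder hm _ _

lemma measurableSet_exitStage (hm : ∀ k, Measurable (ξ k)) (e : ℤ) (k : ℕ) :
    MeasurableSet (exitStage ξ a e k) :=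
  Finset.measurableSet_biUnion _ fun _ _ => measurableSet_cylinder hm _ _

lemma measurableSet_zeroEvent (hm : ∀ k, Measurable (ξ k)) : MeasurableSet (zeroEvent ξ a) :=
  .iUnion (measurableSet_zeroStage hm)

lemma measurableSet_exitEvent (hm : ∀ k, Measurable (ξ k)) (e : ℤ) :
    MeasurableSet (exitEvent ξ a e) :=
  .iUnion (measurableSet_exitStage hm e)

lemma IsSSRW.measure_zeroStage (W : IsSSRW P ξ) (ha : IsThreshold p a) (k : ℕ) :
    P (zeroStage ξ a k) = (a (k + 1) - 2 * a k : ℕ) * 2⁻¹ ^ (2 * (k + 1)) := by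
  have hlt {m} (hm : m ∈ Finset.Ico (2 * a k) (a (k + 1))) : m < 2 ^ (k + 1) :=
    (Finset.mem_Ico.1 hm).2.trans_le (ha.le_two_pow _)
  rw [zeroStage, measure_biUnion_finset
      (fun m hm m' hm' hne => disjoint_neutral_cylinder (hlt hm) (hlt hm') hne)
      fun m _ => measurableSet_cylinder W.meas _ _,
    Finset.sum_congr rfl fun m _ => W.measure_cylinder fun i _ _ => neutralPattern_eq_one_or _ _ _,
    Finset.sum_const, Nat.card_Ico, nsmul_eq_mul]

lemma IsSSRW.measure_exitStage (W : IsSSRW P ξ) {e : ℤ} (he : e = 1 ∨ e = -1) (k : ℕ) :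
    P (exitStage ξ a e k) = (2 ^ k - a k : ℕ) * 2⁻¹ ^ (2 * (k + 1)) := by
  rw [exitStage, measure_biUnion_finset (fun m hm m' hm' hne =>
      (disjoint_neutral_cylinder (Finset.mem_Ico.1 hm).2 (Finset.mem_Ico.1 hm').2 hne).mono
        (exit_cylinder_subset e) (exit_cylinder_subset e))
      fun m _ => measurableSet_cylinder W.meas _ _,
    Finset.sum_congr rfl fun m _ => W.measure_cylinder fun i _ _ => exitPattern_eq_one_or he _ _ _,
    Finset.sum_const, Nat.card_Ico, nsmul_eq_mul]

lemma IsSSRW.measure_zeroEvent (W : IsSSRW P ξ) (ha : IsThreshold p a) :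
    P (zeroEvent ξ a) = ENNReal.ofReal p := by
  rw [zeroEvent, measure_iUnion (fun k k' hne => disjoint_of_eqOn_const
      (fun ω hω => (stoppedAt_of_mem_zeroStage ha hω).1)
      (fun ω hω => (stoppedAt_of_mem_zeroStage ha hω).1) (by norm_cast; omega))
      fun k => measurableSet_zeroStage W.meas k]
  simp_rw [W.measure_zeroStage ha]
  exact ENNReal.tsum_natCast_mul_inv_two_pow ha.hasSum

lemma IsSSRW.measure_exitEvent (W : IsSSRW P ξ) (ha : IsThreshold p a) {e : ℤ}
    (he : e = 1 ∨ e = -1) : P (exitEvent ξ a e) = ENNReal.ofReal ((1 - p) / 2) := by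
  rw [exitEvent, measure_iUnion (fun k k' hne => disjoint_of_eqOn_const
      (fun ω hω => (stoppedAt_of_mem_exitStage ha he hω).1)
      (fun ω hω => (stoppedAt_of_mem_exitStage ha he hω).1) (by norm_cast; omega))
      fun k => measurableSet_exitStage W.meas e k]
  simp_rw [W.measure_exitStage he]
  exact ENNReal.tsum_natCast_mul_inv_two_pow ha.hasSum_exit

omit [MeasurableSpace Ω] in
lemma exists_stoppedAt (ha : IsThreshold p a) {ω : Ω}
    (hω : ω ∈ zeroEvent ξ a ∪ exitEvent ξ a 1 ∪ exitEvent ξ a (-1)) :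
    ∃ N z, StoppedAt ξ a N z ω := by
  simp only [zeroEvent, exitEvent, Set.mem_union, Set.mem_iUnion] at hω
  rcases hω with (⟨k, hω⟩ | ⟨k, hω⟩) | ⟨k, hω⟩
  exacts [⟨_, _, stoppedAt_of_mem_zeroStage ha hω⟩,
    ⟨_, _, stoppedAt_of_mem_exitStage ha (Or.inl rfl) hω⟩,
    ⟨_, _, stoppedAt_of_mem_exitStage ha (Or.inr rfl) hω⟩]

omit [MeasurableSpace Ω] in
lemma stopVal_eq_of_mem_zeroEvent (ha : IsThreshold p a) {ω : Ω} (hω : ω ∈ zeroEvent ξ a) :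
    stopVal ξ (stopTime ξ a) ω = 0 :=
  let ⟨_, hk⟩ := Set.mem_iUnion.1 hω
  (stoppedAt_of_mem_zeroStage ha hk).stopVal_eq

omit [MeasurableSpace Ω] in
lemma stopVal_eq_of_mem_exitEvent (ha : IsThreshold p a) {e : ℤ} (he : e = 1 ∨ e = -1) {ω : Ω}
    (hω : ω ∈ exitEvent ξ a e) : stopVal ξ (stopTime ξ a) ω = 2 * e :=
  let ⟨_, hk⟩ := Set.mem_iUnion.1 hω
  (stoppedAt_of_mem_exitStage ha he hk).stopVal_eq

omit [MeasurableSpace Ω] in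
lemma disjoint_zeroEvent_exitEvent (ha : IsThreshold p a) {e : ℤ} (he : e = 1 ∨ e = -1) :
    Disjoint (zeroEvent ξ a) (exitEvent ξ a e) :=
  disjoint_of_eqOn_const (fun _ => stopVal_eq_of_mem_zeroEvent ha)
    (fun _ => stopVal_eq_of_mem_exitEvent ha he) (by rcases he with rfl | rfl <;> norm_num)

omit [MeasurableSpace Ω] in
lemma disjoint_exitEvent_one_neg_one (ha : IsThreshold p a) :
    Disjoint (exitEvent ξ a 1) (exitEvent ξ a (-1)) :=
  disjoint_of_eqOn_const (fun _ => stopVal_eq_of_mem_exitEvent ha (Or.inl rfl))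
    (fun _ => stopVal_eq_of_mem_exitEvent ha (Or.inr rfl)) (by norm_num)

omit [MeasurableSpace Ω] in
lemma disjoint_zeroEvent_exitEvent_union (ha : IsThreshold p a) :
    Disjoint (zeroEvent ξ a ∪ exitEvent ξ a 1) (exitEvent ξ a (-1)) :=
  (disjoint_zeroEvent_exitEvent ha (Or.inr rfl)).union_left (disjoint_exitEvent_one_neg_one ha)

lemma IsSSRW.ae_mem_stopEvents (W : IsSSRW P ξ) (ha : IsThreshold p a) :
    ∀ᵐ ω ∂P, ω ∈ zeroEvent ξ a ∪ exitEvent ξ a 1 ∪ exitEvent ξ a (-1) := by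
  have := W.isProb
  have hp : 0 ≤ p := ha.hasSum.nonneg fun k => by positivity
  have hq : 0 ≤ (1 - p) / 2 := ha.hasSum_exit.nonneg fun k => by positivity
  have hmeas : MeasurableSet (zeroEvent ξ a ∪ exitEvent ξ a 1 ∪ exitEvent ξ a (-1)) :=
    ((measurableSet_zeroEvent W.meas).union (measurableSet_exitEvent W.meas 1)).union
      (measurableSet_exitEvent W.meas (-1))
  refine ae_iff.2 <| (prob_compl_eq_zero_iff hmeas).2 ?_
  rw [measure_union (disjoint_zeroEvent_exitEvent_union ha) (measurableSet_exitEvent W.meas _),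
    measure_union (disjoint_zeroEvent_exitEvent ha (Or.inl rfl)) (measurableSet_exitEvent W.meas _),
    W.measure_zeroEvent ha, W.measure_exitEvent ha (Or.inl rfl),
    W.measure_exitEvent ha (Or.inr rfl), ← ENNReal.ofReal_add hp hq,
    ← ENNReal.ofReal_add (by positivity) hq]
  ring_nf
  exact ENNReal.ofReal_one

lemma IsSSRW.map_stopVal (W : IsSSRW P ξ) (ha : IsThreshold p a) :
    Measure.map (stopVal ξ (stopTime ξ a)) P = muP p := by
  have hmeasZ := measurableSet_zeroEvent (a := a) W.meas
  have hmeasE := measurableSet_exitEvent (a := a) W.meas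
  have hval := measurable_stopVal W.meas (measurable_of_isStop (isStop_stopTime (a := a) W.meas))
  conv_lhs => rw [← Measure.restrict_eq_self_of_ae_mem (W.ae_mem_stopEvents ha)]
  rw [Measure.restrict_union (disjoint_zeroEvent_exitEvent_union ha) (hmeasE _),
    Measure.restrict_union (disjoint_zeroEvent_exitEvent ha (Or.inl rfl)) (hmeasE _),
    Measure.map_add _ _ hval, Measure.map_add _ _ hval,
    map_restrict_eq_smul_dirac hmeasZ fun ω => stopVal_eq_of_mem_zeroEvent ha,
    map_restrict_eq_smul_dirac (hmeasE _) fun ω => stopVal_eq_of_mem_exitEvent ha (Or.inl rfl),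
    map_restrict_eq_smul_dirac (hmeasE _) fun ω => stopVal_eq_of_mem_exitEvent ha (Or.inr rfl),
    W.measure_zeroEvent ha, W.measure_exitEvent ha (Or.inl rfl),
    W.measure_exitEvent ha (Or.inr rfl), muP, smul_add]
  norm_num [add_assoc, add_comm (ENNReal.ofReal ((1 - p) / 2) • Measure.dirac (2 : ℤ))]

lemma IsSSRW.isUIStop_stopTime (W : IsSSRW P ξ) (ha : IsThreshold p a) :
    IsUIStop P ξ W.meas (stopTime ξ a) := by
  have := W.isProb
  have hmart : Martingale (stopProc ξ (stopTime ξ a)) (natFilt ξ W.meas) P := by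
    rw [stopProc_eq_stoppedProcess]
    exact martingale_stoppedProcess W.martingale_walk (isStop_stopTime W.meas)
  have hstopped : ∀ᵐ ω ∂P, ∃ N z, StoppedAt ξ a N z ω :=
    (W.ae_mem_stopEvents ha).mono fun _ => exists_stoppedAt ha
  exact ⟨isStop_stopTime W.meas, hstopped.mono fun _ ⟨_, _, h⟩ => h.stopTime_lt_top, hmart,
    uniformIntegrable_of_ae_abs_le (fun n => (hmart.integrable n).aestronglyMeasurable)
      (hstopped.mono fun _ ⟨_, _, h⟩ => h.abs_stopProc_le)⟩

lemma IsSSRW.muP_mem_MUI (W : IsSSRW P ξ) (ha : IsThreshold p a) : muP p ∈ MUI P ξ W.meas :=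
  ⟨stopTime ξ a, W.isUIStop_stopTime ha, W.map_stopVal ha⟩

end Embedding

/-- The interval `[0, 1/6]` is contained in `S`: every measure
`μ_p = p δ₀ + ((1-p)/2)(δ₋₂ + δ₂)` with `p ∈ [0, 1/6]` admits a UI embedding. -/
theorem Icc_zero_sixth_subset_Sset
    {Ω : Type*} [MeasurableSpace Ω] (P : Measure Ω) (ξ : ℕ → Ω → ℤ)
    (W : IsSSRW P ξ) :
    Set.Icc (0 : ℝ) (1 / 6) ⊆ Sset P ξ W.meas := by
  intro p hp
  obtain ⟨a, ha⟩ := exists_isThreshold hp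
  exact ⟨⟨hp.1, hp.2.trans (by norm_num)⟩, W.muP_mem_MUI ha⟩

end RWSkorokhod
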